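/- arXiv:2503.18295 — 3 statements merged into one kernel-verified Lean document; each statement's English description precedes it below -/
import Mathlib

section
/- For any F ⊆ ℝ and x ∈ ℝ^d, the set D(F, x) (the smallest F-semialgebraic set containing x which is algebraic) is an irreducible algebraic set. -/
open MvPolynomial Filter Metric
open scoped ENNReal NNReal

noncomputable section

/-- `A ⊆ ℝ^d` is (real) algebraic: the zero set of a real polynomial in `d` variables. -/
def IsAlgSet {d : ℕ} (A : Set (Fin d → ℝ)) : Prop :=
  ∃ p : MvPolynomial (Fin d) ℝ, A = {z | MvPolynomial.eval z p = 0}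

/-- An algebraic set is irreducible if whenever it is a union of two algebraic sets,
one of them is the whole set. -/
def IsIrredAlgSet {d : ℕ} (A : Set (Fin d → ℝ)) : Prop :=
  IsAlgSet A ∧ ∀ B C : Set (Fin d → ℝ), IsAlgSet B → IsAlgSet C → A = B ∪ C → B = A ∨ C = A

/-- `F`-semialgebraic subsets of `ℝ^d`: the sets definable in the ordered field `ℝ`
with parameters from `F` (presented, via quantifier elimination for real closed fields,
as the closure of sign conditions of polynomials over `ℤ[F]` under boolean operations
and projections/existential quantification). -/
inductive IsSemialg (F : Set ℝ) : (d : ℕ) → Set (Fin d → ℝ) → Prop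
  | zero {d} (p : MvPolynomial (Fin d) ℝ) (hp : ∀ m, MvPolynomial.coeff m p ∈ Subring.closure F) :
      IsSemialg F d {x | MvPolynomial.eval x p = 0}
  | lt {d} (p : MvPolynomial (Fin d) ℝ) (hp : ∀ m, MvPolynomial.coeff m p ∈ Subring.closure F) :
      IsSemialg F d {x | 0 < MvPolynomial.eval x p}
  | compl {d} {s : Set (Fin d → ℝ)} : IsSemialg F d s → IsSemialg F d sᶜ
  | inter {d} {s t : Set (Fin d → ℝ)} : IsSemialg F d s → IsSemialg F d t → IsSemialg F d (s ∩ t)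
  | proj {d} {s : Set (Fin (d+1) → ℝ)} : IsSemialg F (d+1) s →
      IsSemialg F d {x | ∃ y : ℝ, Fin.snoc x y ∈ s}

/-- `D(F, x)`: the smallest `F`-semialgebraic set containing `x` which is algebraic
(by the Hilbert basis theorem the intersection below is itself such a set, i.e. realizes
the smallest one). -/
def Dset {d : ℕ} (F : Set ℝ) (x : Fin d → ℝ) : Set (Fin d → ℝ) :=
  ⋂₀ {A | IsAlgSet A ∧ IsSemialg F d A ∧ x ∈ A}
namespace DsetAux

variable {F : Set ℝ}

/-- coefficients in the subring closure -/
def Good (F : Set ℝ) {n : ℕ} (p : MvPolynomial (Fin n) ℝ) : Prop :=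
  ∀ m, MvPolynomial.coeff m p ∈ Subring.closure F

variable {n m : ℕ}

theorem Good.add {p q : MvPolynomial (Fin n) ℝ} (hp : Good F p) (hq : Good F q) :
    Good F (p + q) := fun mm => by
  rw [MvPolynomial.coeff_add]; exact add_mem (hp mm) (hq mm)

theorem Good.mul {p q : MvPolynomial (Fin n) ℝ} (hp : Good F p) (hq : Good F q) :
    Good F (p * q) := fun mm => by
  classical
  rw [MvPolynomial.coeff_mul]
  exact Subring.sum_mem _ fun c _ => mul_mem (hp c.1) (hq c.2)

theorem Good.zero : Good F (0 : MvPolynomial (Fin n) ℝ) := fun mm => by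
  simp [MvPolynomial.coeff_zero]

theorem Good.neg {p : MvPolynomial (Fin n) ℝ} (hp : Good F p) : Good F (-p) := fun mm => by
  rw [MvPolynomial.coeff_neg]; exact neg_mem (hp mm)

theorem Good.sub {p q : MvPolynomial (Fin n) ℝ} (hp : Good F p) (hq : Good F q) :
    Good F (p - q) := by
  rw [sub_eq_add_neg]; exact hp.add hq.neg

theorem Good.sum {α : Type*} (s : Finset α) (f : α → MvPolynomial (Fin n) ℝ)
    (h : ∀ a ∈ s, Good F (f a)) : Good F (∑ a ∈ s, f a) := fun mm => by
  classical
  rw [MvPolynomial.coeff_sum]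
  exact Subring.sum_mem _ fun a ha => h a ha mm

theorem Good.monomial {d : Fin n →₀ ℕ} {c : ℝ} (hc : c ∈ Subring.closure F) :
    Good F (MvPolynomial.monomial d c) := fun mm => by
  classical
  rw [MvPolynomial.coeff_monomial]
  split <;> simp_all [zero_mem]

theorem Good.X (i : Fin n) : Good F (MvPolynomial.X i : MvPolynomial (Fin n) ℝ) := by
  rw [MvPolynomial.X]
  exact Good.monomial (one_mem _)

theorem Good.intC (z : ℤ) : Good F (MvPolynomial.C (z : ℝ) : MvPolynomial (Fin n) ℝ) := by
  rw [MvPolynomial.C_apply]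
  exact Good.monomial (intCast_mem _ z)

theorem Good.natC (z : ℕ) : Good F (MvPolynomial.C (z : ℝ) : MvPolynomial (Fin n) ℝ) := by
  have := Good.intC (F := F) (n := n) (z : ℤ)
  simpa using this

theorem Good.pow {p : MvPolynomial (Fin n) ℝ} (hp : Good F p) (k : ℕ) : Good F (p ^ k) := by
  induction k with
  | zero => simpa [pow_zero] using Good.natC (F := F) (n := n) 1
  | succ k ih => rw [pow_succ]; exact ih.mul hp

theorem Good.rename {p : MvPolynomial (Fin n) ℝ} (hp : Good F p) (f : Fin n → Fin m) :
    Good F (MvPolynomial.rename f p) := by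
  classical
  rw [MvPolynomial.as_sum p, map_sum]
  refine Good.sum _ _ fun v hv => ?_
  rw [MvPolynomial.rename_monomial]
  exact Good.monomial (hp v)

/-- common vanishing locus of an arbitrary family of polynomials is algebraic -/
theorem isAlgSet_vanishing {d : ℕ} (P : Set (MvPolynomial (Fin d) ℝ)) :
    ∃ f : MvPolynomial (Fin d) ℝ,
      {z : Fin d → ℝ | ∀ g ∈ P, MvPolynomial.eval z g = 0} = {z | MvPolynomial.eval z f = 0} := by
  classical
  have hfg : (Ideal.span P).FG := IsNoetherian.noetherian _
  obtain ⟨G, hG⟩ := hfg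
  refine ⟨∑ g ∈ G, g ^ 2, ?_⟩
  ext z
  simp only [Set.mem_setOf_eq]
  constructor
  · intro h
    have hker : Ideal.span P ≤ RingHom.ker (MvPolynomial.eval z) := by
      rw [Ideal.span_le]
      intro g hg
      exact h g hg
    have : ∀ g ∈ G, MvPolynomial.eval z g = 0 := by
      intro g hg
      have : g ∈ Ideal.span P := by
        rw [← hG]; exact Ideal.subset_span hg
      exact hker this
    rw [map_sum]
    refine Finset.sum_eq_zero fun g hg => ?_
    rw [map_pow, this g hg]; ring
  · intro h g hg
    rw [map_sum] at h
    have hsq : ∀ g ∈ G, MvPolynomial.eval z (g ^ 2) = 0 := by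
      rw [Finset.sum_eq_zero_iff_of_nonneg] at h
      · exact h
      · intro i _
        rw [map_pow]
        exact sq_nonneg _
    have hGz : ∀ g' ∈ G, MvPolynomial.eval z g' = 0 := by
      intro g' hg'
      have := hsq g' hg'
      rw [map_pow] at this
      exact pow_eq_zero_iff (n := 2) (by norm_num) |>.mp this
    have hker : Ideal.span (↑G : Set (MvPolynomial (Fin d) ℝ)) ≤ RingHom.ker (MvPolynomial.eval z) := by
      rw [Ideal.span_le]
      intro g' hg'
      exact hGz g' hg'
    rw [hG] at hker
    exact hker (Ideal.subset_span hg)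




variable {F : Set ℝ}

theorem IsSemialg.comap {n : ℕ} {s : Set (Fin n → ℝ)} (h : IsSemialg F n s) :
    ∀ {m : ℕ} (f : Fin n → Fin m), IsSemialg F m {v | v ∘ f ∈ s} := by
  induction h with
  | zero p hp =>
    intro m f
    have : {v : Fin m → ℝ | v ∘ f ∈ {x | MvPolynomial.eval x p = 0}}
        = {v | MvPolynomial.eval v (MvPolynomial.rename f p) = 0} := by
      ext v; simp [MvPolynomial.eval_rename]
    rw [this]
    exact IsSemialg.zero _ (Good.rename hp f)
  | lt p hp =>
    intro m f
    have : {v : Fin m → ℝ | v ∘ f ∈ {x | 0 < MvPolynomial.eval x p}}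
        = {v | 0 < MvPolynomial.eval v (MvPolynomial.rename f p)} := by
      ext v; simp [MvPolynomial.eval_rename]
    rw [this]
    exact IsSemialg.lt _ (Good.rename hp f)
  | @compl d s hs ih =>
    intro m f
    have heq : {v : Fin m → ℝ | v ∘ f ∈ sᶜ} = {v : Fin m → ℝ | v ∘ f ∈ s}ᶜ := rfl
    rw [heq]
    exact IsSemialg.compl (ih f)
  | inter hs ht ihs iht =>
    intro m f
    exact IsSemialg.inter (ihs f) (iht f)
  | @proj d s hs ih =>
    intro m f
    have key : {v : Fin m → ℝ | v ∘ f ∈ {x | ∃ y : ℝ, Fin.snoc x y ∈ s}}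
        = {v : Fin m → ℝ | ∃ y : ℝ, Fin.snoc v y ∈
            {u : Fin (m+1) → ℝ | u ∘ (fun i : Fin (d+1) =>
              Fin.lastCases (Fin.last m) (fun j => Fin.castSucc (f j)) i) ∈ s}} := by
      ext v
      simp only [Set.mem_setOf_eq]
      constructor
      · rintro ⟨y, hy⟩
        refine ⟨y, ?_⟩
        convert hy using 1
        funext i
        refine Fin.lastCases ?_ (fun j => ?_) i
        · simp [Fin.snoc_last]
        · simp [Fin.snoc_castSucc]
      · rintro ⟨y, hy⟩
        refine ⟨y, ?_⟩
        convert hy using 1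
        funext i
        refine Fin.lastCases ?_ (fun j => ?_) i
        · simp [Fin.snoc_last]
        · simp [Fin.snoc_castSucc]
    rw [key]
    exact IsSemialg.proj (ih _)

theorem IsSemialg.union {n : ℕ} {s t : Set (Fin n → ℝ)} (hs : IsSemialg F n s)
    (ht : IsSemialg F n t) : IsSemialg F n (s ∪ t) := by
  have : s ∪ t = (sᶜ ∩ tᶜ)ᶜ := by
    simp [Set.compl_inter]
  rw [this]
  exact (hs.compl.inter ht.compl).compl

theorem semialgCongr {n : ℕ} {s t : Set (Fin n → ℝ)} (hs : IsSemialg F n s) (h : t = s) :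
    IsSemialg F n t := h ▸ hs

theorem isSemialg_exists_block {n : ℕ} : ∀ (k : ℕ) (s : Set (Fin (n + k) → ℝ)),
    IsSemialg F (n + k) s →
    IsSemialg F n {v | ∃ y : Fin k → ℝ, Fin.append v y ∈ s} := by
  intro k
  induction k with
  | zero =>
    intro s hs
    refine semialgCongr hs ?_
    ext v
    simp only [Set.mem_setOf_eq]
    constructor
    · rintro ⟨y, hy⟩
      have hy0 : y = Fin.elim0 := Subsingleton.elim _ _
      subst hy0
      rw [Fin.append_elim0] at hy
      have : v ∘ Fin.cast (Nat.add_zero n).symm = v := by funext i; rfl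
      rwa [this] at hy
    · intro hv
      refine ⟨Fin.elim0, ?_⟩
      rw [Fin.append_elim0]
      have : v ∘ Fin.cast (Nat.add_zero n).symm = v := by funext i; rfl
      rwa [this]
  | succ k ih =>
    intro s hs
    have h2 := ih _ (IsSemialg.proj hs)
    refine semialgCongr h2 ?_
    ext v
    simp only [Set.mem_setOf_eq]
    constructor
    · rintro ⟨y, hy⟩
      refine ⟨Fin.init y, y (Fin.last k), ?_⟩
      rw [← Fin.append_snoc, Fin.snoc_init_self]
      exact hy
    · rintro ⟨y, t, hy⟩
      refine ⟨Fin.snoc y t, ?_⟩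
      rw [Fin.append_snoc]
      exact hy

theorem isSemialg_forall_block {n : ℕ} (k : ℕ) (s : Set (Fin (n + k) → ℝ))
    (hs : IsSemialg F (n + k) s) :
    IsSemialg F n {v | ∀ y : Fin k → ℝ, Fin.append v y ∈ s} := by
  have h1 := (isSemialg_exists_block (F := F) k sᶜ hs.compl).compl
  refine semialgCongr h1 ?_
  ext v
  simp [Set.mem_setOf_eq]

end DsetAux

namespace DsetAux

section GPoly

variable {d : ℕ} (𝔐 : Finset (Fin d →₀ ℕ))

/-- enumeration of the allowed monomials -/
def emb (j : Fin 𝔐.card) : Fin d →₀ ℕ := (𝔐.equivFin.symm j : {x // x ∈ 𝔐})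

/-- the generic polynomial with monomial set `𝔐` and coefficients `a` -/
def gpoly (a : Fin 𝔐.card → ℝ) : MvPolynomial (Fin d) ℝ :=
  ∑ j, MvPolynomial.monomial (emb 𝔐 j) (a j)

theorem gpoly_repr (r : MvPolynomial (Fin d) ℝ) (hr : r.support ⊆ 𝔐) :
    gpoly 𝔐 (fun j => MvPolynomial.coeff (emb 𝔐 j) r) = r := by
  classical
  have h1 : gpoly 𝔐 (fun j => MvPolynomial.coeff (emb 𝔐 j) r)
      = ∑ m ∈ 𝔐, MvPolynomial.monomial m (MvPolynomial.coeff m r) := by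
    rw [gpoly]
    rw [← Finset.sum_attach 𝔐 (fun m => MvPolynomial.monomial m (MvPolynomial.coeff m r))]
    exact (Equiv.sum_comp 𝔐.equivFin.symm
      (fun (s : {x // x ∈ 𝔐}) => MvPolynomial.monomial (s : Fin d →₀ ℕ)
        (MvPolynomial.coeff (s : Fin d →₀ ℕ) r)))
  rw [h1, ← Finset.sum_subset hr (fun m _ hm => ?_), ← MvPolynomial.as_sum]
  rw [MvPolynomial.notMem_support_iff.mp hm]
  simp

theorem support_gpoly (a : Fin 𝔐.card → ℝ) : (gpoly 𝔐 a).support ⊆ 𝔐 := by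
  classical
  refine (MvPolynomial.support_sum (s := Finset.univ)
    (f := fun j => MvPolynomial.monomial (emb 𝔐 j) (a j))).trans ?_
  intro m hm
  simp only [Finset.mem_biUnion] at hm
  obtain ⟨j, _, hj⟩ := hm
  have := MvPolynomial.support_monomial_subset hj
  simp only [Finset.mem_singleton] at this
  subst this
  exact (𝔐.equivFin.symm j).2

/-- generic polynomial transported into a larger variable context -/
def PG {n : ℕ} (fa : Fin 𝔐.card → Fin n) (fw : Fin d → Fin n) : MvPolynomial (Fin n) ℝ :=
  ∑ j, MvPolynomial.X (fa j) * MvPolynomial.rename fw (MvPolynomial.monomial (emb 𝔐 j) 1)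

theorem eval_PG {n : ℕ} (fa : Fin 𝔐.card → Fin n) (fw : Fin d → Fin n) (v : Fin n → ℝ) :
    MvPolynomial.eval v (PG 𝔐 fa fw) = MvPolynomial.eval (v ∘ fw) (gpoly 𝔐 (v ∘ fa)) := by
  rw [PG, gpoly, map_sum, map_sum]
  refine Finset.sum_congr rfl fun j _ => ?_
  rw [map_mul, MvPolynomial.eval_rename, MvPolynomial.eval_X,
    MvPolynomial.eval_monomial, MvPolynomial.eval_monomial]
  simp only [Function.comp_apply, one_mul]

theorem good_PG {F : Set ℝ} {n : ℕ} (fa : Fin 𝔐.card → Fin n) (fw : Fin d → Fin n) :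
    Good F (PG 𝔐 fa fw) := by
  refine Good.sum _ _ fun j _ => Good.mul (Good.X _) ?_
  exact Good.rename (Good.monomial (one_mem _)) fw

end GPoly

section TsetSec

variable {d : ℕ} (𝔐 : Finset (Fin d →₀ ℕ)) (U : Set (Fin d → ℝ))

/-- degree-`𝔐` Zariski closure of `U` -/
def Tset : Set (Fin d → ℝ) :=
  {z | ∀ a : Fin 𝔐.card → ℝ,
    (∀ w ∈ U, MvPolynomial.eval w (gpoly 𝔐 a) = 0) → MvPolynomial.eval z (gpoly 𝔐 a) = 0}

theorem subset_Tset : U ⊆ Tset 𝔐 U := fun z hz a ha => ha z hz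

theorem Tset_subset_zero (g : MvPolynomial (Fin d) ℝ) (hsupp : g.support ⊆ 𝔐)
    (hvan : ∀ w ∈ U, MvPolynomial.eval w g = 0) :
    Tset 𝔐 U ⊆ {z | MvPolynomial.eval z g = 0} := by
  intro z hz
  have := hz (fun j => MvPolynomial.coeff (emb 𝔐 j) g)
  rw [gpoly_repr 𝔐 g hsupp] at this
  exact this hvan

theorem isAlgSet_Tset : IsAlgSet (Tset 𝔐 U) := by
  obtain ⟨f, hf⟩ := isAlgSet_vanishing
    {g : MvPolynomial (Fin d) ℝ | (∃ a, g = gpoly 𝔐 a) ∧ ∀ w ∈ U, MvPolynomial.eval w g = 0}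
  refine ⟨f, ?_⟩
  rw [← hf]
  ext z
  simp only [Tset, Set.mem_setOf_eq]
  constructor
  · rintro hz g ⟨⟨a, rfl⟩, hvan⟩
    exact hz a hvan
  · intro hz a ha
    exact hz (gpoly 𝔐 a) ⟨⟨a, rfl⟩, ha⟩

theorem isSemialg_Tset {F : Set ℝ} (hU : IsSemialg F d U) : IsSemialg F d (Tset 𝔐 U) := by
  classical
  set M := 𝔐.card with hM
  let fz2 : Fin d → Fin (d + M) := Fin.castAdd M
  let fa2 : Fin M → Fin (d + M) := Fin.natAdd d
  let fz3 : Fin d → Fin ((d + M) + d) := Fin.castAdd d ∘ fz2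
  let fa3 : Fin M → Fin ((d + M) + d) := Fin.castAdd d ∘ fa2
  let fw3 : Fin d → Fin ((d + M) + d) := Fin.natAdd (d + M)
  have hI3 : IsSemialg F ((d + M) + d)
      (({v | v ∘ fw3 ∈ U} ∩ {v | MvPolynomial.eval v (PG 𝔐 fa3 fw3) = 0}ᶜ)ᶜ) :=
    IsSemialg.compl (IsSemialg.inter (IsSemialg.comap hU fw3)
      (IsSemialg.compl (IsSemialg.zero _ (good_PG 𝔐 fa3 fw3))))
  have hAnt := isSemialg_forall_block (F := F) (n := d + M) d _ hI3
  have hConc : IsSemialg F (d + M) {u | MvPolynomial.eval u (PG 𝔐 fa2 fz2) = 0} :=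
    IsSemialg.zero _ (good_PG 𝔐 fa2 fz2)
  have hT2 := IsSemialg.union (IsSemialg.compl hAnt) hConc
  have hA := isSemialg_forall_block (F := F) (n := d) M _ hT2
  refine semialgCongr hA ?_
  have e1 : ∀ (z : Fin d → ℝ) (a : Fin M → ℝ), (Fin.append z a) ∘ fz2 = z := by
    intro z a; funext i; exact Fin.append_left _ _ i
  have e2 : ∀ (z : Fin d → ℝ) (a : Fin M → ℝ), (Fin.append z a) ∘ fa2 = a := by
    intro z a; funext i; exact Fin.append_right _ _ i
  have e3 : ∀ (u : Fin (d + M) → ℝ) (w : Fin d → ℝ), (Fin.append u w) ∘ fw3 = w := by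
    intro u w; funext i; exact Fin.append_right _ _ i
  have e4 : ∀ (u : Fin (d + M) → ℝ) (w : Fin d → ℝ), (Fin.append u w) ∘ fa3 = u ∘ fa2 := by
    intro u w; funext i
    exact Fin.append_left _ _ (fa2 i)
  have e5 : ∀ (u : Fin (d + M) → ℝ) (w : Fin d → ℝ), (Fin.append u w) ∘ fz3 = u ∘ fz2 := by
    intro u w; funext i
    exact Fin.append_left _ _ (fz2 i)
  ext z
  simp only [Tset, Set.mem_setOf_eq, Set.mem_union, Set.mem_compl_iff, Set.mem_inter_iff,
    eval_PG, e1, e2, e3, e4]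
  constructor
  · intro h a
    by_cases hg : ∀ w ∈ U, MvPolynomial.eval w (gpoly 𝔐 a) = 0
    · exact Or.inr (h a hg)
    · push_neg at hg
      obtain ⟨w, hwU, hwg⟩ := hg
      exact Or.inl fun hall => hall w ⟨hwU, hwg⟩
  · intro h a hvan
    rcases h a with hl | hr
    · exfalso
      push_neg at hl
      obtain ⟨w, hwU, hwg⟩ := hl
      exact hwg (hvan w hwU)
    · exact hr

end TsetSec

end DsetAux

namespace DsetAux

section BallPolys

variable {d : ℕ}

/-- ball polynomial: radius variable `fρ`, center variables `fz`, point variables `fw` -/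
def Pball {n : ℕ} (fρ : Fin n) (fz fw : Fin d → Fin n) : MvPolynomial (Fin n) ℝ :=
  MvPolynomial.X fρ - ∑ i, (MvPolynomial.X (fw i) - MvPolynomial.X (fz i))^2

theorem eval_Pball {n : ℕ} (fρ : Fin n) (fz fw : Fin d → Fin n) (v : Fin n → ℝ) :
    MvPolynomial.eval v (Pball fρ fz fw) = v fρ - ∑ i, (v (fw i) - v (fz i))^2 := by
  simp [Pball]

theorem good_Pball {F : Set ℝ} {n : ℕ} (fρ : Fin n) (fz fw : Fin d → Fin n) :
    Good F (Pball fρ fz fw) :=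
  (Good.X _).sub (Good.sum _ _ fun i _ => ((Good.X _).sub (Good.X _)).pow 2)

/-- integer ball polynomial -/
def PIb (k : ℕ) (c : Fin d → ℤ) (r : ℕ) : MvPolynomial (Fin d) ℝ :=
  MvPolynomial.C (r : ℝ) - ∑ i, (MvPolynomial.C (k : ℝ) * MvPolynomial.X i
    - MvPolynomial.C (c i : ℝ))^2

theorem eval_PIb (k : ℕ) (c : Fin d → ℤ) (r : ℕ) (w : Fin d → ℝ) :
    MvPolynomial.eval w (PIb k c r) = (r : ℝ) - ∑ i, ((k : ℝ) * w i - (c i : ℝ))^2 := by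
  simp [PIb]

theorem good_PIb {F : Set ℝ} (k : ℕ) (c : Fin d → ℤ) (r : ℕ) : Good F (PIb k c r) :=
  (Good.natC r).sub (Good.sum _ _ fun i _ =>
    (((Good.natC k).mul (Good.X i)).sub (Good.intC (c i))).pow 2)

end BallPolys

section AsetSec

variable {d : ℕ} (𝔐 : Finset (Fin d →₀ ℕ)) (D : Set (Fin d → ℝ))

/-- the set of "locally Zariski-generic" points of `D` (w.r.t. monomials in `𝔐`) -/
def Aset : Set (Fin d → ℝ) :=
  {z | ∀ a : Fin 𝔐.card → ℝ,
    (∃ ρ : ℝ, 0 < ρ ∧ ∀ w, w ∈ D → (∑ i, (w i - z i)^2) < ρ →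
        MvPolynomial.eval w (gpoly 𝔐 a) = 0) →
    ∀ w, w ∈ D → MvPolynomial.eval w (gpoly 𝔐 a) = 0}

theorem isSemialg_Aset {F : Set ℝ} (hD : IsSemialg F d D) : IsSemialg F d (Aset 𝔐 D) := by
  classical
  set M := 𝔐.card with hM
  let fz2 : Fin d → Fin (d + M) := Fin.castAdd M
  let fa2 : Fin M → Fin (d + M) := Fin.natAdd d
  -- context with ρ
  let fz3 : Fin d → Fin ((d + M) + 1) := Fin.castSucc ∘ fz2
  let fa3 : Fin M → Fin ((d + M) + 1) := Fin.castSucc ∘ fa2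
  let fρ3 : Fin ((d + M) + 1) := Fin.last (d + M)
  -- context with ρ and w
  let fz4 : Fin d → Fin (((d + M) + 1) + d) := Fin.castAdd d ∘ fz3
  let fa4 : Fin M → Fin (((d + M) + 1) + d) := Fin.castAdd d ∘ fa3
  let fρ4 : Fin (((d + M) + 1) + d) := Fin.castAdd d fρ3
  let fw4 : Fin d → Fin (((d + M) + 1) + d) := Fin.natAdd ((d + M) + 1)
  -- context with w only (for the global condition)
  let fz3g : Fin d → Fin ((d + M) + d) := Fin.castAdd d ∘ fz2
  let fa3g : Fin M → Fin ((d + M) + d) := Fin.castAdd d ∘ fa2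
  let fw3g : Fin d → Fin ((d + M) + d) := Fin.natAdd (d + M)
  have hI4 : IsSemialg F (((d + M) + 1) + d)
      (({v | v ∘ fw4 ∈ D} ∩ {v | 0 < MvPolynomial.eval v (Pball fρ4 fz4 fw4)}
        ∩ {v | MvPolynomial.eval v (PG 𝔐 fa4 fw4) = 0}ᶜ)ᶜ) :=
    IsSemialg.compl (IsSemialg.inter (IsSemialg.inter (IsSemialg.comap hD fw4)
      (IsSemialg.lt _ (good_Pball fρ4 fz4 fw4)))
      (IsSemialg.compl (IsSemialg.zero _ (good_PG 𝔐 fa4 fw4))))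
  have hLocAll := isSemialg_forall_block (F := F) (n := (d + M) + 1) d _ hI4
  have hPos : IsSemialg F ((d + M) + 1)
      {u | 0 < MvPolynomial.eval u (MvPolynomial.X fρ3)} :=
    IsSemialg.lt _ (Good.X fρ3)
  have hLoc3 := IsSemialg.inter hPos hLocAll
  have hLoc2 := IsSemialg.proj hLoc3
  have hI3 : IsSemialg F ((d + M) + d)
      (({v | v ∘ fw3g ∈ D} ∩ {v | MvPolynomial.eval v (PG 𝔐 fa3g fw3g) = 0}ᶜ)ᶜ) :=
    IsSemialg.compl (IsSemialg.inter (IsSemialg.comap hD fw3g)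
      (IsSemialg.compl (IsSemialg.zero _ (good_PG 𝔐 fa3g fw3g))))
  have hGlob := isSemialg_forall_block (F := F) (n := d + M) d _ hI3
  have hImp := IsSemialg.union (IsSemialg.compl hLoc2) hGlob
  have hA := isSemialg_forall_block (F := F) (n := d) M _ hImp
  refine semialgCongr hA ?_
  have e1 : ∀ (z : Fin d → ℝ) (a : Fin M → ℝ), (Fin.append z a) ∘ fz2 = z := by
    intro z a; funext i; exact Fin.append_left _ _ i
  have e2 : ∀ (z : Fin d → ℝ) (a : Fin M → ℝ), (Fin.append z a) ∘ fa2 = a := by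
    intro z a; funext i; exact Fin.append_right _ _ i
  have e3 : ∀ (u : Fin (d + M) → ℝ) (w : Fin d → ℝ), (Fin.append u w) ∘ fw3g = w := by
    intro u w; funext i; exact Fin.append_right _ _ i
  have e4 : ∀ (u : Fin (d + M) → ℝ) (w : Fin d → ℝ), (Fin.append u w) ∘ fa3g = u ∘ fa2 := by
    intro u w; funext i; exact Fin.append_left _ _ (fa2 i)
  have e5 : ∀ (u : Fin (d + M) → ℝ) (w : Fin d → ℝ), (Fin.append u w) ∘ fz3g = u ∘ fz2 := by
    intro u w; funext i; exact Fin.append_left _ _ (fz2 i)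
  have g1 : ∀ (u : Fin (d + M) → ℝ) (t : ℝ) (w : Fin d → ℝ),
      (Fin.append (Fin.snoc u t) w) ∘ fw4 = w := by
    intro u t w; funext i; exact Fin.append_right _ _ i
  have g2 : ∀ (u : Fin (d + M) → ℝ) (t : ℝ) (w : Fin d → ℝ),
      (Fin.append (Fin.snoc u t) w) ∘ fz4 = u ∘ fz2 := by
    intro u t w; funext i
    show (Fin.append (Fin.snoc u t) w) (Fin.castAdd d (Fin.castSucc (fz2 i))) = u (fz2 i)
    rw [Fin.append_left, Fin.snoc_castSucc]
  have g3 : ∀ (u : Fin (d + M) → ℝ) (t : ℝ) (w : Fin d → ℝ),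
      (Fin.append (Fin.snoc u t) w) ∘ fa4 = u ∘ fa2 := by
    intro u t w; funext i
    show (Fin.append (Fin.snoc u t) w) (Fin.castAdd d (Fin.castSucc (fa2 i))) = u (fa2 i)
    rw [Fin.append_left, Fin.snoc_castSucc]
  have g4 : ∀ (u : Fin (d + M) → ℝ) (t : ℝ) (w : Fin d → ℝ),
      (Fin.append (Fin.snoc u t) w) fρ4 = t := by
    intro u t w
    show (Fin.append (Fin.snoc u t) w) (Fin.castAdd d (Fin.last (d + M))) = t
    rw [Fin.append_left, Fin.snoc_last]
  have g5 : ∀ (u : Fin (d + M) → ℝ) (t : ℝ),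
      MvPolynomial.eval (Fin.snoc u t) (MvPolynomial.X fρ3) = t := by
    intro u t
    rw [MvPolynomial.eval_X]
    exact Fin.snoc_last _ _
  have g1p : ∀ (u : Fin (d + M) → ℝ) (t : ℝ) (w : Fin d → ℝ) (i : Fin d),
      (Fin.append (Fin.snoc u t) w) (fw4 i) = w i := by
    intro u t w i; exact Fin.append_right _ _ i
  have g2p : ∀ (z : Fin d → ℝ) (a : Fin M → ℝ) (t : ℝ) (w : Fin d → ℝ) (i : Fin d),
      (Fin.append (Fin.snoc (Fin.append z a) t) w) (fz4 i) = z i := by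
    intro z a t w i
    show (Fin.append (Fin.snoc (Fin.append z a) t) w) (Fin.castAdd d (Fin.castSucc (fz2 i))) = z i
    rw [Fin.append_left, Fin.snoc_castSucc]
    exact Fin.append_left _ _ i
  ext z
  simp only [Aset, Set.mem_setOf_eq, Set.mem_union, Set.mem_compl_iff, Set.mem_inter_iff,
    eval_PG, eval_Pball, e1, e2, e3, e4, g1, g2, g3, g4, g5, g1p, g2p, Function.comp_apply]
  constructor
  · intro h a
    by_cases hg : ∀ w, w ∈ D → MvPolynomial.eval w (gpoly 𝔐 a) = 0
    · refine Or.inr fun w => fun hc => hc.2 (hg w hc.1)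
    · refine Or.inl fun hex => ?_
      push_neg at hg
      obtain ⟨w0, hw0D, hw0⟩ := hg
      obtain ⟨t, ⟨htpos, hall⟩⟩ := hex
      have hloc : ∃ ρ : ℝ, 0 < ρ ∧ ∀ w, w ∈ D → (∑ i, (w i - z i)^2) < ρ →
          MvPolynomial.eval w (gpoly 𝔐 a) = 0 := by
        refine ⟨t, htpos, fun w hwD hwb => ?_⟩
        by_contra hne
        exact hall w ⟨⟨hwD, by linarith⟩, hne⟩
      exact hw0 (h a hloc w0 hw0D)
  · intro h a hloc w hwD
    obtain ⟨ρ, hρpos, hρ⟩ := hloc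
    rcases h a with hl | hr
    · exfalso
      apply hl
      refine ⟨ρ, hρpos, fun w' => ?_⟩
      rintro ⟨⟨hw'D, hw'b⟩, hw'g⟩
      exact hw'g (hρ w' hw'D (by linarith))
    · by_contra hne
      exact hr w ⟨hwD, hne⟩

end AsetSec

end DsetAux

namespace DsetAux

section Analysis

variable {d : ℕ}

theorem continuous_eval' (g : MvPolynomial (Fin d) ℝ) :
    Continuous fun w : Fin d → ℝ => MvPolynomial.eval w g := by
  apply MvPolynomial.induction_on g
  · intro a
    simpa using continuous_const
  · intro p q hp hq
    have : (fun w : Fin d → ℝ => MvPolynomial.eval w (p + q))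
        = fun w => MvPolynomial.eval w p + MvPolynomial.eval w q := by
      funext w; rw [map_add]
    rw [this]; exact hp.add hq
  · intro p n hp
    have : (fun w : Fin d → ℝ => MvPolynomial.eval w (p * MvPolynomial.X n))
        = fun w => MvPolynomial.eval w p * w n := by
      funext w; rw [map_mul, MvPolynomial.eval_X]
    rw [this]; exact hp.mul (continuous_apply n)

theorem exists_radius (g : MvPolynomial (Fin d) ℝ) (z : Fin d → ℝ)
    (hz : MvPolynomial.eval z g ≠ 0) :
    ∃ ρ : ℝ, 0 < ρ ∧ ∀ w : Fin d → ℝ, (∑ i, (w i - z i)^2) < ρ →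
      MvPolynomial.eval w g ≠ 0 := by
  have hopen : IsOpen {w : Fin d → ℝ | MvPolynomial.eval w g ≠ 0} := by
    have : {w : Fin d → ℝ | MvPolynomial.eval w g ≠ 0}
        = (fun w => MvPolynomial.eval w g) ⁻¹' {y | y ≠ 0} := rfl
    rw [this]
    exact IsOpen.preimage (continuous_eval' g) isOpen_ne
  obtain ⟨ε, hε, hball⟩ := Metric.isOpen_iff.mp hopen z hz
  refine ⟨ε^2, by positivity, fun w hw => ?_⟩
  apply hball
  rw [Metric.mem_ball, dist_pi_lt_iff hε]
  intro b
  rw [Real.dist_eq]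
  have h1 : (w b - z b)^2 ≤ ∑ i, (w i - z i)^2 :=
    Finset.single_le_sum (f := fun i => (w i - z i)^2) (fun i _ => sq_nonneg _)
      (Finset.mem_univ b)
  nlinarith [abs_nonneg (w b - z b), sq_abs (w b - z b)]

theorem int_ball (z : Fin d → ℝ) (ρ : ℝ) (hρ : 0 < ρ) :
    ∃ (k : ℕ) (c : Fin d → ℤ) (r : ℕ),
      (∑ i, ((k:ℝ) * z i - (c i : ℝ))^2) < r ∧
      ∀ w : Fin d → ℝ, (∑ i, ((k:ℝ) * w i - (c i : ℝ))^2) < r →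
        (∑ i, (w i - z i)^2) < ρ := by
  obtain ⟨k0, hk0⟩ := exists_nat_gt ((4*(d:ℝ)+4)/ρ)
  set k : ℕ := k0 + 1 with hkdef
  have hk1 : (1:ℝ) ≤ (k:ℝ) := by exact_mod_cast Nat.one_le_iff_ne_zero.mpr (by omega)
  have hkpos : (0:ℝ) < (k:ℝ) := by linarith
  have hkk : (4*(d:ℝ)+4)/ρ < (k:ℝ)^2 := by
    have h1 : (k0:ℝ) ≤ (k:ℝ) := by exact_mod_cast Nat.le_succ k0
    nlinarith
  have hmain : 4*(d:ℝ)+4 < ρ * (k:ℝ)^2 := by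
    rw [div_lt_iff₀ hρ] at hkk
    nlinarith
  refine ⟨k, fun i => ⌊(k:ℝ) * z i⌋, d + 1, ?_, ?_⟩
  · have hterm : ∀ i : Fin d, ((k:ℝ) * z i - (⌊(k:ℝ) * z i⌋ : ℝ))^2 ≤ 1 := by
      intro i
      have h1 := Int.floor_le ((k:ℝ) * z i)
      have h2 := Int.lt_floor_add_one ((k:ℝ) * z i)
      nlinarith
    calc (∑ i, ((k:ℝ) * z i - ((⌊(k:ℝ) * z i⌋ : ℤ) : ℝ))^2)
        ≤ ∑ _i : Fin d, (1:ℝ) := Finset.sum_le_sum fun i _ => hterm i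
      _ = (d:ℝ) := by simp
      _ < ((d+1:ℕ):ℝ) := by push_cast; linarith
  · intro w hw
    have hx : (∑ i, ((k:ℝ) * z i - ((⌊(k:ℝ) * z i⌋ : ℤ) : ℝ))^2) ≤ (d:ℝ) := by
      have hterm : ∀ i : Fin d, ((k:ℝ) * z i - (⌊(k:ℝ) * z i⌋ : ℝ))^2 ≤ 1 := by
        intro i
        have h1 := Int.floor_le ((k:ℝ) * z i)
        have h2 := Int.lt_floor_add_one ((k:ℝ) * z i)
        nlinarith
      calc (∑ i, ((k:ℝ) * z i - ((⌊(k:ℝ) * z i⌋ : ℤ) : ℝ))^2)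
          ≤ ∑ _i : Fin d, (1:ℝ) := Finset.sum_le_sum fun i _ => hterm i
        _ = (d:ℝ) := by simp
    have hw' : (∑ i, ((k:ℝ) * w i - ((⌊(k:ℝ) * z i⌋ : ℤ) : ℝ))^2) < (d:ℝ) + 1 := by
      have : ((d + 1 : ℕ) : ℝ) = (d:ℝ) + 1 := by push_cast; ring
      rw [this] at hw
      exact hw
    have hkey : ∀ i : Fin d, (k:ℝ)^2 * (w i - z i)^2
        ≤ 2*((k:ℝ) * w i - ((⌊(k:ℝ) * z i⌋ : ℤ) : ℝ))^2
          + 2*((k:ℝ) * z i - ((⌊(k:ℝ) * z i⌋ : ℤ) : ℝ))^2 := by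
      intro i
      nlinarith [sq_nonneg (((k:ℝ) * w i - ((⌊(k:ℝ) * z i⌋ : ℤ) : ℝ))
        + ((k:ℝ) * z i - ((⌊(k:ℝ) * z i⌋ : ℤ) : ℝ)))]
    have hsum : (k:ℝ)^2 * (∑ i, (w i - z i)^2)
        ≤ 2*(∑ i, ((k:ℝ) * w i - ((⌊(k:ℝ) * z i⌋ : ℤ) : ℝ))^2)
          + 2*(∑ i, ((k:ℝ) * z i - ((⌊(k:ℝ) * z i⌋ : ℤ) : ℝ))^2) := by
      rw [Finset.mul_sum, Finset.mul_sum, Finset.mul_sum, ← Finset.sum_add_distrib]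
      exact Finset.sum_le_sum fun i _ => hkey i
    nlinarith [hsum, hw', hx, hmain, sq_nonneg ((k:ℝ))]

end Analysis

end DsetAux

open DsetAux in
/-- For any `F ⊆ ℝ` and `x ∈ ℝ^d`, the smallest `F`-semialgebraic set containing `x`
which is algebraic is an irreducible algebraic set. -/
theorem Dset_irreducible (d : ℕ) (F : Set ℝ) (x : Fin d → ℝ) (D : Set (Fin d → ℝ))
    (hD : IsLeast {A : Set (Fin d → ℝ) | IsAlgSet A ∧ IsSemialg F d A ∧ x ∈ A} D) :
    IsIrredAlgSet D := by
  classical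
  obtain ⟨⟨hDalg, hDsa, hxD⟩, hmin⟩ := hD
  refine ⟨hDalg, ?_⟩
  intro B C hBalg hCalg hBC
  by_contra hcon
  push_neg at hcon
  obtain ⟨hBne, hCne⟩ := hcon
  obtain ⟨p, hBdef⟩ := hBalg
  obtain ⟨q, hCdef⟩ := hCalg
  have hBD : B ⊆ D := hBC ▸ Set.subset_union_left
  have hCD : C ⊆ D := hBC ▸ Set.subset_union_right
  obtain ⟨γ, hγD, hγB⟩ : ∃ γ ∈ D, γ ∉ B := by
    by_contra hg
    push_neg at hg
    exact hBne (Set.Subset.antisymm hBD hg)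
  obtain ⟨δ, hδD, hδC⟩ : ∃ δ ∈ D, δ ∉ C := by
    by_contra hg
    push_neg at hg
    exact hCne (Set.Subset.antisymm hCD hg)
  have hγp : MvPolynomial.eval γ p ≠ 0 := by
    intro h
    exact hγB (by rw [hBdef]; exact h)
  have hδq : MvPolynomial.eval δ q ≠ 0 := by
    intro h
    exact hδC (by rw [hCdef]; exact h)
  set 𝔐 : Finset (Fin d →₀ ℕ) := p.support ∪ q.support with h𝔐
  have hpsupp : p.support ⊆ 𝔐 := Finset.subset_union_left
  have hqsupp : q.support ⊆ 𝔐 := Finset.subset_union_right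
  set A : Set (Fin d → ℝ) := Aset 𝔐 D with hAdef
  -- Claim 1 : `x` is locally Zariski-generic in `D`, i.e. `x ∈ A`.
  have hxA : x ∈ A := by
    intro a hloc
    obtain ⟨ρ, hρpos, hρ⟩ := hloc
    obtain ⟨k, c, r, hxball, hballsub⟩ := int_ball x ρ hρpos
    set U : Set (Fin d → ℝ) := D ∩ {w | 0 < MvPolynomial.eval w (PIb k c r)} with hUdef
    have hUsa : IsSemialg F d U := IsSemialg.inter hDsa (IsSemialg.lt _ (good_PIb k c r))
    have hxU : x ∈ U := by
      refine ⟨hxD, ?_⟩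
      show 0 < MvPolynomial.eval x (PIb k c r)
      rw [eval_PIb]
      linarith
    have hTmem : Tset 𝔐 U ∈ {A : Set (Fin d → ℝ) | IsAlgSet A ∧ IsSemialg F d A ∧ x ∈ A} :=
      ⟨isAlgSet_Tset 𝔐 U, isSemialg_Tset 𝔐 U hUsa, subset_Tset 𝔐 U hxU⟩
    have hT := hmin hTmem
    have hvan : ∀ w ∈ U, MvPolynomial.eval w (gpoly 𝔐 a) = 0 := by
      rintro w ⟨hwD, hwball⟩
      have hwball' : 0 < MvPolynomial.eval w (PIb k c r) := hwball
      rw [eval_PIb] at hwball'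
      exact hρ w hwD (hballsub w (by linarith))
    intro w hwD
    exact Tset_subset_zero 𝔐 U (gpoly 𝔐 a) (support_gpoly 𝔐 a) hvan (hT hwD)
  -- Claim 2 : `p` vanishes on `A`.
  have hAB : ∀ z ∈ A, MvPolynomial.eval z p = 0 := by
    intro z hzA
    by_contra hzp
    obtain ⟨ρ, hρpos, hρ⟩ := exists_radius p z hzp
    have hrepr : gpoly 𝔐 (fun j => MvPolynomial.coeff (emb 𝔐 j) q) = q := gpoly_repr 𝔐 q hqsupp
    have hloc : ∃ ρ' : ℝ, 0 < ρ' ∧ ∀ w, w ∈ D → (∑ i, (w i - z i)^2) < ρ' →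
        MvPolynomial.eval w (gpoly 𝔐 (fun j => MvPolynomial.coeff (emb 𝔐 j) q)) = 0 := by
      refine ⟨ρ, hρpos, fun w hwD hwball => ?_⟩
      rw [hrepr]
      have hwBC : w ∈ B ∪ C := hBC ▸ hwD
      rcases hwBC with hwB | hwC
      · exfalso
        exact hρ w hwball (by rw [hBdef] at hwB; exact hwB)
      · rw [hCdef] at hwC
        exact hwC
    have hglob := hzA _ hloc
    rw [hrepr] at hglob
    exact hδq (hglob δ hδD)
  -- Conclusion: the Zariski-type closure of `A` is in the family, so `D ⊆ Z(p)`.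
  have hAsa : IsSemialg F d A := isSemialg_Aset 𝔐 D hDsa
  have hWmem : Tset 𝔐 A ∈ {A : Set (Fin d → ℝ) | IsAlgSet A ∧ IsSemialg F d A ∧ x ∈ A} :=
    ⟨isAlgSet_Tset 𝔐 A, isSemialg_Tset 𝔐 A hAsa, subset_Tset 𝔐 A hxA⟩
  have hDW := hmin hWmem
  have hfinal : MvPolynomial.eval γ p = 0 :=
    Tset_subset_zero 𝔐 A p hpsupp hAB (hDW hγD)
  exact hγp hfinal
end
end

section
/- Let Γ be an algebraic 2-irreflexive hypergraph of arity 3 on ℝ^d and A ⊆ ℝ. Then ε(A, x) = 0 if and only if D(A, x) = {x}. -/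
open MvPolynomial Filter Metric
open scoped ENNReal NNReal

noncomputable section

/-- A hypergraph `Γ` (of arity ≤ 3) on `ℝ^d` is 2-irreflexive: no 2-element set is in the
Vietoris (Hausdorff-metric) closure of `Γ` in the space of nonempty sets of size ≤ 3. -/
def TwoIrreflexive {d : ℕ} (Γ : Set (Set (EuclideanSpace ℝ (Fin d)))) : Prop :=
  ¬ ∃ x y : EuclideanSpace ℝ (Fin d), x ≠ y ∧
    ∃ e : ℕ → Set (EuclideanSpace ℝ (Fin d)), (∀ n, e n ∈ Γ) ∧
      Filter.Tendsto (fun n => Metric.hausdorffDist (e n) {x, y}) Filter.atTop (nhds 0)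

/-- `Γ` is an algebraic hypergraph of arity 3: hyperedges have exactly 3 elements and each
section `{y : b ∪ {y} ∈ Γ} ∪ b` (for finite `b`) is an algebraic set. -/
def IsAlgHypergraph {d : ℕ} (Γ : Set (Set (EuclideanSpace ℝ (Fin d)))) : Prop :=
  (∀ e ∈ Γ, e.encard = 3) ∧
  ∀ b : Set (EuclideanSpace ℝ (Fin d)), b.Finite → IsAlgSet (WithLp.ofLp '' ({y : EuclideanSpace ℝ (Fin d) | insert y b ∈ Γ} ∪ b))

/-- `ε` witnesses the defining property of `ε(A, x)`: there is no set `b` of points at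
distance `< ε` from `x` such that `b ∪ {y} ∈ Γ` for every `y ∈ D(A,x) \ ({x} ∪ b)`. -/
def epsGood {d : ℕ} (Γ : Set (Set (EuclideanSpace ℝ (Fin d)))) (A : Set ℝ)
    (x : EuclideanSpace ℝ (Fin d)) (ε : ℝ) : Prop :=
  ¬ ∃ b : Set (EuclideanSpace ℝ (Fin d)), (∀ z ∈ b, dist z x < ε) ∧
    ∀ y, y ∈ Dset A x → WithLp.toLp 2 y ≠ x → WithLp.toLp 2 y ∉ b → insert (WithLp.toLp 2 y) b ∈ Γ

/-- `ε(A, x)` as an extended nonnegative real: the supremum of the good `ε > 0`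
(`0` if there are none, `∞` if they are unbounded). -/
def epsVal {d : ℕ} (Γ : Set (Set (EuclideanSpace ℝ (Fin d)))) (A : Set ℝ)
    (x : EuclideanSpace ℝ (Fin d)) : ℝ≥0∞ :=
  sSup (ENNReal.ofReal '' {ε : ℝ | 0 < ε ∧ epsGood Γ A x ε})

theorem Dset_self_mem {d : ℕ} (F : Set ℝ) (x : Fin d → ℝ) : x ∈ Dset F x :=
  fun _ hS => hS.2.2

theorem Metric.hausdorffDist_insert_pair_le {α : Type*} [PseudoMetricSpace α] {x y : α}
    {b : Set α} {r : ℝ} (hb : b.Nonempty) (hbx : ∀ z ∈ b, dist z x ≤ r) :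
    hausdorffDist (insert y b) {y, x} ≤ r := by
  obtain ⟨z₀, hz₀⟩ := hb
  have hr : 0 ≤ r := dist_nonneg.trans (hbx z₀ hz₀)
  refine hausdorffDist_le_of_mem_dist hr ?_ ?_
  · rintro a (rfl | ha)
    · exact ⟨a, by simp, by simpa using hr⟩
    · exact ⟨x, by simp, hbx a ha⟩
  · rintro c (rfl | rfl)
    · exact ⟨c, Set.mem_insert _ _, by simpa using hr⟩
    · exact ⟨z₀, Set.mem_insert_of_mem _ hz₀, by simpa [dist_comm] using hbx z₀ hz₀⟩

/-- Hyperedges through `y` cannot have all their other vertices arbitrarily close to `x`,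
since they would converge to `{y, x}`. -/
theorem TwoIrreflexive.exists_pos_forall_insert_notMem {d : ℕ}
    {Γ : Set (Set (EuclideanSpace ℝ (Fin d)))} (h2 : TwoIrreflexive Γ)
    {x y : EuclideanSpace ℝ (Fin d)} (hyx : y ≠ x) (hy : {y} ∉ Γ) :
    ∃ ε > 0, ∀ b, (∀ z ∈ b, dist z x < ε) → insert y b ∉ Γ := by
  by_contra! h
  choose b hbx hbΓ using fun n : ℕ => h (1 / (n + 1)) Nat.one_div_pos_of_nat
  have hb : ∀ n, (b n).Nonempty := fun n =>
    Set.nonempty_iff_ne_empty.2 fun hbn => hy (by simpa [hbn] using hbΓ n)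
  refine h2 ⟨y, x, hyx, fun n => insert y (b n), hbΓ, ?_⟩
  exact squeeze_zero (fun _ => hausdorffDist_nonneg)
    (fun n => hausdorffDist_insert_pair_le (hb n) fun z hz => (hbx n z hz).le)
    tendsto_one_div_add_atTop_nhds_zero_nat

theorem sSup_ofReal_image_eq_zero_iff {P : ℝ → Prop} :
    sSup (ENNReal.ofReal '' {ε : ℝ | 0 < ε ∧ P ε}) = 0 ↔ ∀ ε > 0, ¬ P ε := by
  rw [← le_zero_iff, sSup_le_iff]
  simp only [Set.forall_mem_image, Set.mem_ofPred_eq, nonpos_iff_eq_zero,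
    ENNReal.ofReal_eq_zero, and_imp]
  exact forall_congr' fun ε => ⟨fun h hε hP => (h hε hP).not_gt hε,
    fun h hε hP => (h hε hP).elim⟩

theorem not_epsGood_of_Dset_eq_singleton {d : ℕ} {Γ : Set (Set (EuclideanSpace ℝ (Fin d)))}
    {A : Set ℝ} {x : EuclideanSpace ℝ (Fin d)} (hD : Dset A x = {x.ofLp}) (ε : ℝ) :
    ¬ epsGood Γ A x ε := by
  refine not_not.2 ⟨∅, by simp, fun y hy hyx _ => absurd ?_ hyx⟩
  rw [hD, Set.mem_singleton_iff] at hy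
  rw [hy]

theorem exists_pos_epsGood_of_mem_Dset {d : ℕ} {Γ : Set (Set (EuclideanSpace ℝ (Fin d)))}
    (hΓ : ∀ e ∈ Γ, e.encard = 3) (h2 : TwoIrreflexive Γ) {A : Set ℝ}
    {x y : EuclideanSpace ℝ (Fin d)} (hyD : y.ofLp ∈ Dset A x) (hyx : y ≠ x) :
    ∃ ε > 0, epsGood Γ A x ε := by
  have hy : {y} ∉ Γ := fun hyΓ => by simpa using hΓ _ hyΓ
  obtain ⟨ε, hε, hΓε⟩ := h2.exists_pos_forall_insert_notMem hyx hy
  refine ⟨min ε (dist y x), lt_min hε (dist_pos.2 hyx), fun ⟨b, hbx, hbΓ⟩ => ?_⟩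
  have hyb : y ∉ b := fun hyb => (hbx y hyb).not_ge (min_le_right _ _)
  exact hΓε b (fun z hz => (hbx z hz).trans_le (min_le_left _ _)) (hbΓ y hyD hyx hyb)

/-- For an algebraic 2-irreflexive hypergraph `Γ` of arity 3 on `ℝ^d` and `A ⊆ ℝ`:
`ε(A, x) = 0` iff `D(A, x) = {x}`. -/
theorem epsVal_eq_zero_iff (d : ℕ) (Γ : Set (Set (EuclideanSpace ℝ (Fin d))))
    (hΓ : IsAlgHypergraph Γ) (h2 : TwoIrreflexive Γ) (A : Set ℝ)
    (x : EuclideanSpace ℝ (Fin d)) :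
    epsVal Γ A x = 0 ↔ Dset A x = {x.ofLp} := by
  rw [epsVal, sSup_ofReal_image_eq_zero_iff]
  refine ⟨fun h0 => ?_, fun hD ε _ => not_epsGood_of_Dset_eq_singleton hD ε⟩
  refine Set.eq_singleton_iff_unique_mem.2 ⟨Dset_self_mem A x.ofLp, fun y hyD => ?_⟩
  by_contra hyx
  obtain ⟨ε, hε, hgood⟩ := exists_pos_epsGood_of_mem_Dset (y := WithLp.toLp 2 y) hΓ.1 h2 hyD
    (fun h => hyx (by rw [← h]))
  exact h0 ε hε hgood
end
end

section
/- Let C ⊆ (ℝ²)³ be the set of triples (u₀, u₁, u₂) of pairwise distinct points such that |u₀ − u₁| = |u₀ − u₂|. Then the projection of C to any pair of its three coordinates is an open continuous map from C (with the subspace topology) onto an open subset of ℝ² × ℝ². -/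
open MvPolynomial Filter Metric
open scoped ENNReal NNReal

noncomputable section

/-- A map with continuous local sections into `C` maps relatively open
subsets of `C` to open sets. -/
lemma section_open {X Y : Type*} [TopologicalSpace X] [TopologicalSpace Y]
    (C : Set X) (π : X → Y)
    (h : ∀ p ∈ C, ∃ V : Set Y, IsOpen V ∧ π p ∈ V ∧ ∃ s : Y → X, Continuous s ∧
      s (π p) = p ∧ ∀ q ∈ V, s q ∈ C ∧ π (s q) = q) :
    ∀ U : Set X, IsOpen U → IsOpen (π '' (U ∩ C)) := by
  intro U hU
  rw [isOpen_iff_mem_nhds]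
  rintro q ⟨p, ⟨hpU, hpC⟩, rfl⟩
  obtain ⟨V, hV, hpV, s, hs, hsp, hsC⟩ := h p hpC
  have hW : IsOpen (V ∩ s ⁻¹' U) := hV.inter (hU.preimage hs)
  refine Filter.mem_of_superset (hW.mem_nhds ⟨hpV, by simp [hsp, hpU]⟩) ?_
  rintro q ⟨hqV, hqU⟩
  exact ⟨s q, ⟨hqU, (hsC q hqV).1⟩, (hsC q hqV).2⟩

/-- Let `C ⊆ (ℝ²)³` be the set of triples `(u₀, u₁, u₂)` of pairwise distinct points with
`|u₀ - u₁| = |u₀ - u₂|`. Each projection of `C` to a pair of coordinates is continuous on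
`C`, maps relatively open subsets of `C` to open subsets of `ℝ² × ℝ²`, and maps `C` onto
an open subset of `ℝ² × ℝ²`. -/
theorem isosceles_projections_open
    (C : Set (EuclideanSpace ℝ (Fin 2) × EuclideanSpace ℝ (Fin 2) × EuclideanSpace ℝ (Fin 2)))
    (hC : C = {u | u.1 ≠ u.2.1 ∧ u.1 ≠ u.2.2 ∧ u.2.1 ≠ u.2.2 ∧
      dist u.1 u.2.1 = dist u.1 u.2.2}) :
    (ContinuousOn (fun u => (u.1, u.2.1)) C ∧
      (∀ U, IsOpen U → IsOpen ((fun u => (u.1, u.2.1)) '' (U ∩ C))) ∧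
      IsOpen ((fun u => (u.1, u.2.1)) '' C)) ∧
    (ContinuousOn (fun u => (u.1, u.2.2)) C ∧
      (∀ U, IsOpen U → IsOpen ((fun u => (u.1, u.2.2)) '' (U ∩ C))) ∧
      IsOpen ((fun u => (u.1, u.2.2)) '' C)) ∧
    (ContinuousOn (fun u => (u.2.1, u.2.2)) C ∧
      (∀ U, IsOpen U → IsOpen ((fun u => (u.2.1, u.2.2)) '' (U ∩ C))) ∧
      IsOpen ((fun u => (u.2.1, u.2.2)) '' C)) := by
  subst hC
  set E := EuclideanSpace ℝ (Fin 2)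
  set f : E ≃ₗᵢ[ℝ] ℂ := Complex.orthonormalBasisOneI.repr.symm with hf
  set C : Set (E × E × E) := {u | u.1 ≠ u.2.1 ∧ u.1 ≠ u.2.2 ∧ u.2.1 ≠ u.2.2 ∧
      dist u.1 u.2.1 = dist u.1 u.2.2} with hCdef
  have hfd : ∀ x y : E, dist x y = ‖f x - f y‖ := by
    intro x y
    rw [← f.dist_map, Complex.dist_eq]
  have hfi : Function.Injective f := f.injective
  have hVopen : IsOpen {q : E × E | q.1 ≠ q.2} :=
    isOpen_ne_fun continuous_fst continuous_snd
  -- Section hypotheses for the three projections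
  have key1 : ∀ p ∈ C, ∃ V : Set (E × E), IsOpen V ∧ (p.1, p.2.1) ∈ V ∧
      ∃ s : E × E → E × E × E, Continuous s ∧ s (p.1, p.2.1) = p ∧ ∀ q ∈ V,
        s q ∈ C ∧ (fun u : E × E × E => (u.1, u.2.1)) (s q) = q := by
    rintro ⟨u0, u1, u2⟩ ⟨h01, h02, h12, hd⟩
    simp only at h01 h02 h12 hd ⊢
    have hden : f u1 - f u0 ≠ 0 := sub_ne_zero.2 fun h => h01 (hfi h).symm
    have hnum : f u2 - f u0 ≠ 0 := sub_ne_zero.2 fun h => h02 (hfi h).symm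
    have hdz : ‖f u0 - f u1‖ = ‖f u0 - f u2‖ := by rw [← hfd, ← hfd]; exact hd
    obtain ⟨μ, hμ⟩ : ∃ m : ℂ, m = (f u2 - f u0) / (f u1 - f u0) := ⟨_, rfl⟩
    have hμ0 : μ ≠ 0 := hμ ▸ div_ne_zero hnum hden
    have hμ1 : μ ≠ 1 := by
      intro h
      rw [hμ, div_eq_one_iff_eq hden] at h
      exact h12 (hfi (sub_left_inj.mp h)).symm
    have hμnorm : ‖μ‖ = 1 := by
      rw [hμ, norm_div, norm_sub_rev (f u2), norm_sub_rev (f u1), ← hdz,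
        div_self (by simpa [norm_sub_rev] using norm_ne_zero_iff.2 (sub_ne_zero.2 fun h => h01 (hfi h)))]
    refine ⟨{q : E × E | q.1 ≠ q.2}, hVopen, h01,
      fun q => (q.1, q.2, f.symm (f q.1 + μ * (f q.2 - f q.1))), by fun_prop, ?_, ?_⟩
    · simp only [Prod.mk.injEq, true_and]
      rw [hμ, div_mul_cancel₀ _ hden]
      have h4 : f u0 + (f u2 - f u0) = f u2 := by ring
      rw [h4]
      simp
    · rintro ⟨a, b⟩ hab
      simp only [Set.mem_setOf_eq] at hab
      have hw0 : f b - f a ≠ 0 := sub_ne_zero.2 fun h => hab (hfi h).symm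
      refine ⟨⟨hab, fun h => ?_, fun h => ?_, ?_⟩, rfl⟩
      · replace h : a = f.symm (f a + μ * (f b - f a)) := h
        have h2 := congrArg f h
        rw [f.apply_symm_apply] at h2
        exact mul_ne_zero hμ0 hw0 (left_eq_add.mp h2)
      · replace h : b = f.symm (f a + μ * (f b - f a)) := h
        have h2 := congrArg f h
        rw [f.apply_symm_apply] at h2
        have h3 : (1 - μ) * (f b - f a) = 0 := by linear_combination h2
        rcases mul_eq_zero.1 h3 with h' | h'
        · exact hμ1 (sub_eq_zero.mp h').symm
        · exact hw0 h'
      · show dist a b = dist a (f.symm (f a + μ * (f b - f a)))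
        rw [hfd, hfd, f.apply_symm_apply]
        have h3 : f a - (f a + μ * (f b - f a)) = -(μ * (f b - f a)) := by ring
        rw [h3, norm_neg, norm_mul, hμnorm, one_mul, norm_sub_rev]
  have key2 : ∀ p ∈ C, ∃ V : Set (E × E), IsOpen V ∧ (p.1, p.2.2) ∈ V ∧
      ∃ s : E × E → E × E × E, Continuous s ∧ s (p.1, p.2.2) = p ∧ ∀ q ∈ V,
        s q ∈ C ∧ (fun u : E × E × E => (u.1, u.2.2)) (s q) = q := by
    rintro ⟨u0, u1, u2⟩ ⟨h01, h02, h12, hd⟩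
    simp only at h01 h02 h12 hd ⊢
    have hden : f u2 - f u0 ≠ 0 := sub_ne_zero.2 fun h => h02 (hfi h).symm
    have hnum : f u1 - f u0 ≠ 0 := sub_ne_zero.2 fun h => h01 (hfi h).symm
    have hdz : ‖f u0 - f u1‖ = ‖f u0 - f u2‖ := by rw [← hfd, ← hfd]; exact hd
    obtain ⟨μ, hμ⟩ : ∃ m : ℂ, m = (f u1 - f u0) / (f u2 - f u0) := ⟨_, rfl⟩
    have hμ0 : μ ≠ 0 := hμ ▸ div_ne_zero hnum hden
    have hμ1 : μ ≠ 1 := by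
      intro h
      rw [hμ, div_eq_one_iff_eq hden] at h
      exact h12 (hfi (sub_left_inj.mp h))
    have hμnorm : ‖μ‖ = 1 := by
      rw [hμ, norm_div, norm_sub_rev (f u2), norm_sub_rev (f u1), hdz,
        div_self (by simpa [norm_sub_rev] using norm_ne_zero_iff.2 (sub_ne_zero.2 fun h => h02 (hfi h)))]
    refine ⟨{q : E × E | q.1 ≠ q.2}, hVopen, h02,
      fun q => (q.1, f.symm (f q.1 + μ * (f q.2 - f q.1)), q.2), by fun_prop, ?_, ?_⟩
    · simp only [Prod.mk.injEq, true_and, and_true]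
      rw [hμ, div_mul_cancel₀ _ hden]
      have h4 : f u0 + (f u1 - f u0) = f u1 := by ring
      rw [h4]
      simp
    · rintro ⟨a, b⟩ hab
      simp only [Set.mem_setOf_eq] at hab
      have hw0 : f b - f a ≠ 0 := sub_ne_zero.2 fun h => hab (hfi h).symm
      refine ⟨⟨fun h => ?_, hab, fun h => ?_, ?_⟩, rfl⟩
      · replace h : a = f.symm (f a + μ * (f b - f a)) := h
        have h2 := congrArg f h
        rw [f.apply_symm_apply] at h2
        exact mul_ne_zero hμ0 hw0 (left_eq_add.mp h2)
      · replace h : f.symm (f a + μ * (f b - f a)) = b := h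
        have h2 := congrArg f h
        rw [f.apply_symm_apply] at h2
        have h3 : (1 - μ) * (f b - f a) = 0 := by linear_combination -h2
        rcases mul_eq_zero.1 h3 with h' | h'
        · exact hμ1 (sub_eq_zero.mp h').symm
        · exact hw0 h'
      · show dist a (f.symm (f a + μ * (f b - f a))) = dist a b
        rw [hfd, hfd, f.apply_symm_apply]
        have h3 : f a - (f a + μ * (f b - f a)) = -(μ * (f b - f a)) := by ring
        rw [h3, norm_neg, norm_mul, hμnorm, one_mul, norm_sub_rev]
  have key3 : ∀ p ∈ C, ∃ V : Set (E × E), IsOpen V ∧ (p.2.1, p.2.2) ∈ V ∧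
      ∃ s : E × E → E × E × E, Continuous s ∧ s (p.2.1, p.2.2) = p ∧ ∀ q ∈ V,
        s q ∈ C ∧ (fun u : E × E × E => (u.2.1, u.2.2)) (s q) = q := by
    rintro ⟨u0, u1, u2⟩ ⟨h01, h02, h12, hd⟩
    simp only at h01 h02 h12 hd ⊢
    have hden : f u2 - f u1 ≠ 0 := sub_ne_zero.2 fun h => h12 (hfi h).symm
    obtain ⟨μ, hμ⟩ : ∃ m : ℂ, m = (f u0 - (f u1 + f u2) / 2) / (f u2 - f u1) := ⟨_, rfl⟩
    have hk1 : f u0 - f u1 = (f u2 - f u1) * (1 / 2 + μ) := by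
      rw [hμ]; field_simp; ring
    have hk2 : f u0 - f u2 = (f u2 - f u1) * (μ - 1 / 2) := by
      rw [hμ]; field_simp; ring
    have ha : (1 / 2 : ℂ) + μ ≠ 0 := by
      intro h
      have h2 : f u0 - f u1 = 0 := by rw [hk1, h, mul_zero]
      exact h01 (hfi (sub_eq_zero.mp h2))
    have hb : μ - (1 / 2 : ℂ) ≠ 0 := by
      intro h
      have h2 : f u0 - f u2 = 0 := by rw [hk2, h, mul_zero]
      exact h02 (hfi (sub_eq_zero.mp h2))
    have hdz : ‖f u0 - f u1‖ = ‖f u0 - f u2‖ := by rw [← hfd, ← hfd]; exact hd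
    have hnorm : ‖(1 / 2 : ℂ) + μ‖ = ‖μ - 1 / 2‖ := by
      rw [hk1, hk2, norm_mul, norm_mul] at hdz
      exact mul_left_cancel₀ (norm_ne_zero_iff.2 hden) hdz
    refine ⟨{q : E × E | q.1 ≠ q.2}, hVopen, h12,
      fun q => (f.symm ((f q.1 + f q.2) / 2 + μ * (f q.2 - f q.1)), q.1, q.2),
      by fun_prop, ?_, ?_⟩
    · simp only [Prod.mk.injEq, and_true]
      rw [hμ, div_mul_cancel₀ _ hden]
      have h4 : (f u1 + f u2) / 2 + (f u0 - (f u1 + f u2) / 2) = f u0 := by ring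
      rw [h4]
      simp
    · rintro ⟨b, c⟩ hbc
      simp only [Set.mem_setOf_eq] at hbc
      have hw0 : f c - f b ≠ 0 := sub_ne_zero.2 fun h => hbc (hfi h).symm
      refine ⟨⟨fun h => ?_, fun h => ?_, hbc, ?_⟩, rfl⟩
      · replace h : f.symm ((f b + f c) / 2 + μ * (f c - f b)) = b := h
        have h2 := congrArg f h
        rw [f.apply_symm_apply] at h2
        have h3 : (f c - f b) * (1 / 2 + μ) = 0 := by linear_combination h2
        exact mul_ne_zero hw0 ha h3
      · replace h : f.symm ((f b + f c) / 2 + μ * (f c - f b)) = c := h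
        have h2 := congrArg f h
        rw [f.apply_symm_apply] at h2
        have h3 : (f c - f b) * (μ - 1 / 2) = 0 := by linear_combination h2
        exact mul_ne_zero hw0 hb h3
      · show dist (f.symm ((f b + f c) / 2 + μ * (f c - f b))) b =
          dist (f.symm ((f b + f c) / 2 + μ * (f c - f b))) c
        rw [hfd, hfd, f.apply_symm_apply]
        have hz1 : (f b + f c) / 2 + μ * (f c - f b) - f b = (f c - f b) * (1 / 2 + μ) := by ring
        have hz2 : (f b + f c) / 2 + μ * (f c - f b) - f c = (f c - f b) * (μ - 1 / 2) := by ring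
        rw [hz1, hz2, norm_mul, norm_mul, hnorm]
  refine ⟨⟨by fun_prop, section_open C _ key1, ?_⟩,
    ⟨by fun_prop, section_open C _ key2, ?_⟩,
    ⟨by fun_prop, section_open C _ key3, ?_⟩⟩
  · simpa using section_open C _ key1 Set.univ isOpen_univ
  · simpa using section_open C _ key2 Set.univ isOpen_univ
  · simpa using section_open C _ key3 Set.univ isOpen_univ
end
end
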